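/- Let X, Y be finite random variables, c : X × Y → Z with resolving matrix R (for p_X) of full column rank, Z = c(X,Y) with X ⟂ Y. Suppose Y' is independent of X with distribution q, and the Wasserstein-type objective sup_{‖D‖_L ≤ 1} E_Z[D(Z)] − E_{X,Y'}[D(c(X,Y'))] equals 0. Then q equals the distribution of Y. -/

import Mathlib

/-!
On a finite metric space every point is isolated, so a small multiple of the indicator of a
point is 1-Lipschitz; testing the objective against it and its negative shows that the law
`p_Z` of `c (X, Y)` equals the law of `c (X, Y')`. Both laws are the resolving matrix applied
to the law of the second argument, so full column rank gives `q = p_Y`.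
-/

open Matrix

section Separation

variable {Z : Type*} [MetricSpace Z]

theorem exists_pos_lipschitzWith_one_single [DiscreteTopology Z] [DecidableEq Z] (z₀ : Z) :
    ∃ δ > 0, LipschitzWith 1 (Pi.single z₀ δ : Z → ℝ) := by
  obtain ⟨δ, hδ, hisolated⟩ := Metric.isOpen_singleton_iff.1 (isOpen_discrete {z₀})
  have hfar : ∀ z, z ≠ z₀ → δ ≤ dist z z₀ := fun z hz => not_lt.1 (mt (hisolated z) hz)
  refine ⟨δ, hδ, LipschitzWith.of_dist_le_mul fun z w => ?_⟩
  rcases eq_or_ne z z₀ with rfl | hz <;> rcases eq_or_ne w z with rfl | hw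
  · simp
  · simpa [Pi.single_apply, hw, abs_of_pos hδ, dist_comm] using hfar w hw
  · simp
  · rcases eq_or_ne w z₀ with rfl | hw₀
    · simpa [Pi.single_apply, hz, abs_of_pos hδ] using hfar z hz
    · simp [hz, hw₀]

theorem eq_of_forall_lipschitzWith_dotProduct_sub_nonpos [Fintype Z] {μ ν : Z → ℝ}
    (h : ∀ D : Z → ℝ, LipschitzWith 1 D → μ ⬝ᵥ D - ν ⬝ᵥ D ≤ 0) : μ = ν := by
  classical
  funext z₀
  obtain ⟨δ, hδ, hD⟩ := exists_pos_lipschitzWith_one_single (Z := Z) z₀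
  have hle := h _ hD
  have hge := h _ hD.neg
  simp only [dotProduct_single, dotProduct_neg] at hle hge
  nlinarith

end Separation

section OutputDistribution

variable {X Y Z : Type*} [Fintype X] [Fintype Y] [DecidableEq Z]

/-- Column `y` of the resolving matrix, `R z y = ∑ x, p_X x * 𝟙[z = c (x, y)]`. -/
def resolvingColumn (c : X × Y → Z) (pX : X → ℝ) (y : Y) : Z → ℝ :=
  fun z => ∑ x, pX x * if z = c (x, y) then 1 else 0

/-- The law of `c (X, Y')` for independent `X ∼ pX` and `Y' ∼ r`. -/
def outputDist (c : X × Y → Z) (pX : X → ℝ) (r : Y → ℝ) : Z → ℝ :=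
  fun z => ∑ x, ∑ y, pX x * r y * if z = c (x, y) then 1 else 0

theorem outputDist_eq_linearCombination (c : X × Y → Z) (pX : X → ℝ) (r : Y → ℝ) :
    outputDist c pX r = Fintype.linearCombination ℝ (resolvingColumn c pX) r := by
  funext z
  simp only [outputDist, resolvingColumn, Fintype.linearCombination_apply, Finset.sum_apply,
    Pi.smul_apply, smul_eq_mul, Finset.mul_sum]
  rw [Finset.sum_comm]
  exact Finset.sum_congr rfl fun y _ => Finset.sum_congr rfl fun x _ => by ring

theorem outputDist_injective {c : X × Y → Z} {pX : X → ℝ}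
    (hrank : LinearIndependent ℝ (resolvingColumn c pX)) :
    Function.Injective (outputDist c pX) := by
  intro r s hrs
  rw [outputDist_eq_linearCombination, outputDist_eq_linearCombination] at hrs
  exact hrank.fintypeLinearCombination_injective hrs

theorem outputDist_dotProduct [Fintype Z] (c : X × Y → Z) (pX : X → ℝ) (r : Y → ℝ)
    (D : Z → ℝ) : outputDist c pX r ⬝ᵥ D = ∑ x, ∑ y, pX x * r y * D (c (x, y)) := by
  simp only [dotProduct, outputDist, mul_ite, mul_one, mul_zero, Finset.sum_mul, ite_mul,
    zero_mul]
  rw [Finset.sum_comm]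
  refine Finset.sum_congr rfl fun x _ => ?_
  rw [Finset.sum_comm]
  exact Finset.sum_congr rfl fun y _ => by simp

end OutputDistribution

theorem component_identifiable_of_zero_wasserstein_general
    {X Y Z : Type*} [Fintype X] [Fintype Y] [Fintype Z] [DecidableEq Z] [MetricSpace Z]
    (c : X × Y → Z)
    (pX : X → ℝ) (pY : Y → ℝ)
    (hrank : LinearIndependent ℝ
      (fun y : Y => (fun z : Z => ∑ x, pX x * (if z = c (x, y) then (1 : ℝ) else 0))))
    (q : Y → ℝ)
    (hobj : ∀ D : Z → ℝ, LipschitzWith 1 D →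
      (∑ z : Z, (∑ x, ∑ y, pX x * pY y * (if z = c (x, y) then (1 : ℝ) else 0)) * D z) -
      (∑ x, ∑ y, pX x * q y * D (c (x, y))) ≤ 0) :
    q = pY := by
  have hlaw : outputDist c pX pY = outputDist c pX q :=
    eq_of_forall_lipschitzWith_dotProduct_sub_nonpos fun D hD => by
      rw [outputDist_dotProduct c pX q]
      exact hobj D hD
  exact (outputDist_injective hrank hlaw).symm

/-- If the resolving matrix has full column rank and the Wasserstein-type adversarial
objective `sup_{‖D‖_L ≤ 1} E_Z[D] − E_{X,Y'}[D(c(X,Y'))]` is zero (equivalently, every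
1-Lipschitz discriminator achieves a nonpositive gap, since `D = 0` is admissible), then
the alternative component distribution `q` of `Y'` equals `p_Y`. -/
theorem component_identifiable_of_zero_wasserstein
    {X Y Z : Type*} [Fintype X] [Fintype Y] [Fintype Z] [DecidableEq Z] [MetricSpace Z]
    (c : X × Y → Z)
    (pX : X → ℝ) (pY : Y → ℝ)
    (hpX_nonneg : ∀ x, 0 ≤ pX x) (hpX_sum : ∑ x, pX x = 1)
    (hpY_nonneg : ∀ y, 0 ≤ pY y) (hpY_sum : ∑ y, pY y = 1)
    (hrank : LinearIndependent ℝ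
      (fun y : Y => (fun z : Z => ∑ x, pX x * (if z = c (x, y) then (1 : ℝ) else 0))))
    (q : Y → ℝ) (hq_nonneg : ∀ y, 0 ≤ q y) (hq_sum : ∑ y, q y = 1)
    (hobj : ∀ D : Z → ℝ, LipschitzWith 1 D →
      (∑ z : Z, (∑ x, ∑ y, pX x * pY y * (if z = c (x, y) then (1 : ℝ) else 0)) * D z) -
      (∑ x, ∑ y, pX x * q y * D (c (x, y))) ≤ 0) :
    q = pY :=
  component_identifiable_of_zero_wasserstein_general c pX pY hrank q hobj
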